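/- Let G be a non-trivial graph and n ≥ 1. Then n · |Ext(G)| ≤ tn(G ∘ K_n) ≤ n · tn(G), where Ext(G) is the set of extreme vertices of G with respect to toll convexity. -/

import Mathlib

open SimpleGraph

/-- A walk `W` between `u` and `v` is a *tolled walk* if either `u = v` and `W` is trivial,
or `u` and `v` are adjacent and `W` is the single-edge walk, or `u ≠ v` are non-adjacent,
`W` has at least one interior vertex, `u` is adjacent exactly to the interior vertex
at position 1 and `v` exactly to the interior vertex at position `W.length - 1`. -/
def IsTolledWalk {V : Type*} (G : SimpleGraph V) {u v : V} (W : G.Walk u v) : Prop :=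
  (u = v ∧ W.length = 0) ∨
  (G.Adj u v ∧ W.support = [u, v]) ∨
  (¬ G.Adj u v ∧ u ≠ v ∧ 2 ≤ W.length ∧
    (∀ i, 0 < i → i < W.length → (G.Adj u (W.support.getD i u) ↔ i = 1)) ∧
    (∀ i, 0 < i → i < W.length → (G.Adj v (W.support.getD i u) ↔ i = W.length - 1)))

/-- The toll interval between `u` and `v`: vertices lying on some tolled walk. -/
def tollInterval {V : Type*} (G : SimpleGraph V) (u v : V) : Set V :=
  {x | ∃ W : G.Walk u v, IsTolledWalk G W ∧ x ∈ W.support}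

/-- A toll set: the toll intervals between its pairs cover the vertex set. -/
def IsTollSet {V : Type*} (G : SimpleGraph V) (S : Set V) : Prop :=
  ∀ x : V, ∃ u ∈ S, ∃ v ∈ S, x ∈ tollInterval G u v

/-- The toll number: minimum size of a toll set. -/
noncomputable def tollNumber {V : Type*} (G : SimpleGraph V) : ℕ :=
  sInf {n | ∃ S : Set V, S.Finite ∧ S.ncard = n ∧ IsTollSet G S}

/-- `v` is a cut vertex if deleting it disconnects the graph. -/
def IsCutVertex {V : Type*} (G : SimpleGraph V) (v : V) : Prop :=
  ¬ (G.induce {w | w ≠ v}).Preconnected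

/-- The extreme vertices of `G` with respect to toll convexity. -/
def extremeVertices {V : Type*} (G : SimpleGraph V) : Set V :=
  {s | ∀ x y : V, x ≠ s → y ≠ s → s ∉ tollInterval G x y}

/-- The lexicographic product of simple graphs. -/
def lexProd {V W : Type*} (G : SimpleGraph V) (H : SimpleGraph W) : SimpleGraph (V × W) where
  Adj a b := G.Adj a.1 b.1 ∨ (a.1 = b.1 ∧ H.Adj a.2 b.2)
  symm := ⟨by
    rintro a b (h | ⟨h1, h2⟩)
    · exact Or.inl h.symm
    · exact Or.inr ⟨h1.symm, h2.symm⟩⟩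
  loopless := ⟨by
    rintro a (h | ⟨_, h⟩)
    · exact G.irrefl h
    · exact H.irrefl h⟩

/-!
Upper bound: `x ↦ (x, w)` embeds `G` as an induced subgraph of `G ∘ H`, so tolled walks of `G`
lift to every layer and `S × V(H)` is a toll set whenever `S` is one.

Lower bound: every toll set contains all extreme vertices, and `(s, i)` is extreme in `G ∘ K_n`
whenever `s` is extreme in `G`. Distinct vertices of a fibre `{u} × V(K_n)` are adjacent twins,
so a tolled walk between non-adjacent `(u, j)` and `(v, k)` meets the fibres of `u` and `v` only
in its endpoints; projecting it to `G` and merging repeated consecutive vertices gives a tolled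
`u`–`v` walk of `G` through `s`.
-/

namespace SimpleGraph.Walk

variable {V : Type*} {G : SimpleGraph V}

lemma support_getD_eq_getVert {u v : V} (W : G.Walk u v) {i : ℕ} (hi : i ≤ W.length) (d : V) :
    W.support.getD i d = W.getVert i := by
  rw [List.getD_eq_getElem _ _ (by simp; omega), getVert_eq_support_getElem _ hi]

lemma two_le_length_of_not_adj {u v : V} (W : G.Walk u v) (hne : u ≠ v) (hadj : ¬G.Adj u v) :
    2 ≤ W.length := by
  match W with
  | .nil => exact absurd rfl hne
  | .cons h .nil => exact absurd h hadj
  | .cons _ (.cons _ _) => simp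

lemma toll_start_iff {u v : V} (W : G.Walk u v) (huv : ¬G.Adj u v) (hW : 2 ≤ W.length) :
    (∀ i, 0 < i → i < W.length → (G.Adj u (W.support.getD i u) ↔ i = 1)) ↔
      ∀ x ∈ W.support.tail.tail, ¬G.Adj u x := by
  match W with
  | .nil | .cons _ .nil => simp at hW
  | .cons h₁ (.cons h₂ W) =>
    simp only [length_cons, support_cons, List.tail_cons]
    constructor
    · intro hA x hx hux
      obtain ⟨j, rfl, hj⟩ := mem_support_iff_exists_getVert.mp hx
      rcases hj.lt_or_eq with hj | rfl
      · have := (hA (j + 2) (by omega) (by omega)).mp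
        simp only [List.getD_cons_succ, support_getD_eq_getVert _ hj.le] at this
        exact absurd (this hux) (by omega)
      · exact huv (by simpa using hux)
    · intro hA i hi0 hiL
      obtain rfl | ⟨j, rfl⟩ : i = 1 ∨ ∃ j, i = j + 2 := by
        rcases i with _ | _ | j <;> simp_all
      · simpa using h₁
      · simp only [List.getD_cons_succ, support_getD_eq_getVert _ (show j ≤ W.length by omega)]
        exact iff_of_false (hA _ (getVert_mem_support _ _)) (by omega)

lemma toll_end_iff {u v : V} (W : G.Walk u v) (huv : ¬G.Adj u v) (hW : 2 ≤ W.length) :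
    (∀ i, 0 < i → i < W.length → (G.Adj v (W.support.getD i u) ↔ i = W.length - 1)) ↔
      ∀ x ∈ W.support.reverse.tail.tail, ¬G.Adj v x := by
  rw [← support_reverse, ← toll_start_iff W.reverse (fun h ↦ huv h.symm) (by simpa)]
  simp only [length_reverse]
  constructor
  · intro hB i hi0 hiL
    have := hB (W.length - i) (by omega) (by omega)
    rw [support_getD_eq_getVert _ (by omega)] at this
    rw [support_getD_eq_getVert _ (by rw [length_reverse]; omega), getVert_reverse, this]
    omega
  · intro hA i hi0 hiL
    have := hA (W.length - i) (by omega) (by omega)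
    rw [support_getD_eq_getVert _ (by rw [length_reverse]; omega), getVert_reverse,
      Nat.sub_sub_self hiL.le] at this
    rw [support_getD_eq_getVert _ hiL.le, this]
    omega

/-- Such a `z` could only sit at position `1`; position `2` would then be `a` itself, and position
`3` (which exists as `a ≠ b`) a neighbour of `a`. -/
lemma notMem_support_of_adj_of_twin {a b z : V} (W : G.Walk a b) (hne : a ≠ b)
    (hab : ¬G.Adj a b) (hA : ∀ x ∈ W.support.tail.tail, ¬G.Adj a x) (haz : G.Adj a z)
    (hz : ∀ w, G.Adj z w → w = a ∨ G.Adj a w) : z ∉ W.support := by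
  match W with
  | .nil => exact absurd rfl hne
  | .cons h .nil => exact absurd h hab
  | .cons _ (.cons h₂ P) =>
    simp only [support_cons, List.tail_cons, List.mem_cons] at hA ⊢
    rintro (rfl | rfl | hzW)
    · exact G.irrefl haz
    · rcases hz _ h₂ with rfl | h
      · cases P with
        | nil => exact hne rfl
        | cons h₃ P => exact hA _ (by simp) h₃
      · exact hA _ (start_mem_support P) h
    · exact hA z hzW haz

section Collapse

variable {V' : Type*} {H : SimpleGraph V'} [DecidableEq V'] (f : V → V')
  (hf : ∀ ⦃a b⦄, G.Adj a b → f a ≠ f b → H.Adj (f a) (f b))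

def collapse : ∀ {a b : V}, G.Walk a b → H.Walk (f a) (f b)
  | _, _, nil => nil
  | a, _, cons (v := c) h W =>
    if hc : f a = f c then (collapse W).copy hc.symm rfl else cons (hf h hc) (collapse W)

lemma mem_support_collapse {a b x : V} (W : G.Walk a b) (hx : x ∈ W.support) :
    f x ∈ (W.collapse f hf).support := by
  induction W with
  | nil => simp_all [collapse]
  | @cons a c b h W ih =>
    rw [support_cons, List.mem_cons] at hx
    by_cases hc : f a = f c
    · simp only [collapse, dif_pos hc, support_copy]
      rcases hx with rfl | hx
      · rw [hc]
        exact start_mem_support _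
      · exact ih hx
    · simp only [collapse, dif_neg hc, support_cons, List.mem_cons]
      exact hx.imp (congrArg f) ih

lemma support_collapse_sublist {a b : V} (W : G.Walk a b) :
    (W.collapse f hf).support.Sublist (W.support.map f) := by
  induction W with
  | nil => simp [collapse]
  | @cons a c b h W ih =>
    by_cases hc : f a = f c
    · simpa [collapse, dif_pos hc] using ih.cons (f a)
    · simpa [collapse, dif_neg hc] using ih

end Collapse

end SimpleGraph.Walk

section Tolled

variable {V : Type*} {G : SimpleGraph V}

lemma isTolledWalk_iff {u v : V} (W : G.Walk u v) :
    IsTolledWalk G W ↔ (u = v ∧ W.length = 0) ∨ (G.Adj u v ∧ W.support = [u, v]) ∨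
      (¬G.Adj u v ∧ u ≠ v ∧ (∀ x ∈ W.support.tail.tail, ¬G.Adj u x) ∧
        ∀ x ∈ W.support.reverse.tail.tail, ¬G.Adj v x) := by
  refine or_congr_right (or_congr_right ⟨?_, ?_⟩)
  · rintro ⟨huv, hne, hW, hA, hB⟩
    exact ⟨huv, hne, (W.toll_start_iff huv hW).mp hA, (W.toll_end_iff huv hW).mp hB⟩
  · rintro ⟨huv, hne, hA, hB⟩
    have hW := W.two_le_length_of_not_adj hne huv
    exact ⟨huv, hne, hW, (W.toll_start_iff huv hW).mpr hA, (W.toll_end_iff huv hW).mpr hB⟩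

lemma IsTolledWalk.map {V' : Type*} {H : SimpleGraph V'} (f : G ↪g H) {u v : V} {W : G.Walk u v}
    (hW : IsTolledWalk G W) : IsTolledWalk H (W.map f.toHom) := by
  rw [isTolledWalk_iff] at hW ⊢
  rcases hW with ⟨rfl, hW⟩ | ⟨huv, hW⟩ | ⟨huv, hne, hA, hB⟩
  · exact Or.inl ⟨rfl, by rwa [Walk.length_map]⟩
  · exact Or.inr (Or.inl ⟨f.map_adj_iff.mpr huv, by simp [Walk.support_map, hW]⟩)
  · refine Or.inr (Or.inr ⟨f.map_adj_iff.not.mpr huv, f.injective.ne hne, ?_, ?_⟩) <;>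
      simpa only [Walk.support_map, ← List.map_reverse, ← List.map_tail, List.forall_mem_map,
        RelEmbedding.coe_toRelHom, f.map_adj_iff]

end Tolled

section LexProd

variable {V W : Type*} {G : SimpleGraph V} {H : SimpleGraph W}

lemma lexProd_adj_fst_of_fst_ne ⦃a b : V × W⦄ (h : (lexProd G H).Adj a b) (hab : a.1 ≠ b.1) :
    G.Adj a.1 b.1 :=
  h.resolve_right fun h' ↦ hab h'.1

variable (G H) in
def lexProdLeft (w : W) : G ↪g lexProd G H where
  toFun x := (x, w)
  inj' _ _ h := congrArg Prod.fst h
  map_rel_iff' := or_iff_left fun h ↦ H.irrefl h.2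

lemma IsTollSet.prod_univ {S : Set V} (hS : IsTollSet G S) :
    IsTollSet (lexProd G H) (S ×ˢ Set.univ) := by
  rintro ⟨x, w⟩
  obtain ⟨u, hu, v, hv, P, hP, hx⟩ := hS x
  exact ⟨(u, w), ⟨hu, trivial⟩, (v, w), ⟨hv, trivial⟩, P.map (lexProdLeft G H w).toHom,
    hP.map _, (P.support_map _).symm ▸ List.mem_map_of_mem (f := lexProdLeft G H w) hx⟩

lemma isTolledWalk_collapse_fst [DecidableEq V] {u v : V} {j k : W}
    (P : (lexProd G H).Walk (u, j) (v, k)) (huv : u ≠ v) (hG : ¬G.Adj u v)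
    (hA : ∀ x ∈ P.support.tail.tail, ¬(lexProd G H).Adj (u, j) x)
    (hB : ∀ x ∈ P.support.reverse.tail.tail, ¬(lexProd G H).Adj (v, k) x) :
    IsTolledWalk G (P.collapse Prod.fst lexProd_adj_fst_of_fst_ne) := by
  have hsub := P.support_collapse_sublist Prod.fst lexProd_adj_fst_of_fst_ne
  rw [isTolledWalk_iff]
  refine Or.inr (Or.inr ⟨hG, huv, fun x hx hux ↦ ?_, fun x hx hvx ↦ ?_⟩)
  · have := hsub.tail.tail.subset hx
    rw [← List.map_tail, ← List.map_tail] at this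
    obtain ⟨y, hy, rfl⟩ := List.mem_map.mp this
    exact hA y hy (Or.inl hux)
  · have := hsub.reverse.tail.tail.subset hx
    rw [← List.map_reverse, ← List.map_tail, ← List.map_tail] at this
    obtain ⟨y, hy, rfl⟩ := List.mem_map.mp this
    exact hB y hy (Or.inl hvx)

lemma lexProd_top_snd_eq_of_mem_support {u v : V} {j k m : W}
    (P : (lexProd G (⊤ : SimpleGraph W)).Walk (u, j) (v, k)) (hne : (u, j) ≠ (v, k))
    (hadj : ¬(lexProd G ⊤).Adj (u, j) (v, k))
    (hA : ∀ x ∈ P.support.tail.tail, ¬(lexProd G ⊤).Adj (u, j) x)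
    (hm : (u, m) ∈ P.support) : m = j := by
  by_contra hmj
  refine P.notMem_support_of_adj_of_twin (z := (u, m)) hne hadj hA
    (Or.inr ⟨rfl, Ne.symm hmj⟩) ?_ hm
  rintro ⟨x, l⟩ (h | ⟨rfl, -⟩)
  · exact Or.inr (Or.inl h)
  · by_cases hl : l = j
    · exact Or.inl (by rw [hl])
    · exact Or.inr (Or.inr ⟨rfl, Ne.symm hl⟩)

theorem mk_mem_extremeVertices_lexProd {s : V} (hs : s ∈ extremeVertices G) (i : W) :
    (s, i) ∈ extremeVertices (lexProd G (⊤ : SimpleGraph W)) := by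
  classical
  rintro ⟨u, j⟩ ⟨v, k⟩ hu hv ⟨P, hP, hsP⟩
  rw [isTolledWalk_iff] at hP
  rcases hP with ⟨-, hP⟩ | ⟨-, hP⟩ | ⟨hadj, hne, hA, hB⟩
  · rw [Walk.nil_iff_support_eq.mp (Walk.length_eq_zero_iff.mp hP), List.mem_singleton] at hsP
    exact hu hsP.symm
  · rw [hP, List.mem_pair] at hsP
    exact hsP.elim (fun h ↦ hu h.symm) (fun h ↦ hv h.symm)
  · have hGuv : ¬G.Adj u v := fun h ↦ hadj (Or.inl h)
    have huv : u ≠ v := by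
      rintro rfl
      exact hadj (Or.inr ⟨rfl, fun hjk ↦ hne (Prod.ext rfl hjk)⟩)
    have hus : u ≠ s := by
      rintro rfl
      exact hu (by rw [lexProd_top_snd_eq_of_mem_support P hne hadj hA hsP])
    have hvs : v ≠ s := by
      rintro rfl
      have hik := lexProd_top_snd_eq_of_mem_support P.reverse hne.symm (fun h ↦ hadj h.symm)
        (by rwa [Walk.support_reverse]) (by rwa [Walk.support_reverse, List.mem_reverse])
      exact hv (by rw [hik])
    exact hs u v hus hvs ⟨_, isTolledWalk_collapse_fst P huv hGuv hA hB,
      P.mem_support_collapse Prod.fst lexProd_adj_fst_of_fst_ne hsP⟩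

end LexProd

section TollNumber

variable {V : Type*} {G : SimpleGraph V}

lemma isTollSet_univ (G : SimpleGraph V) : IsTollSet G Set.univ :=
  fun x ↦ ⟨x, trivial, x, trivial, Walk.nil, Or.inl ⟨rfl, rfl⟩, Walk.start_mem_support _⟩

lemma exists_isTollSet_ncard_eq_tollNumber [Finite V] (G : SimpleGraph V) :
    ∃ S : Set V, S.ncard = tollNumber G ∧ IsTollSet G S := by
  obtain ⟨S, -, hS, hSG⟩ := Nat.sInf_mem (s := {n | ∃ S : Set V, S.Finite ∧ S.ncard = n ∧
    IsTollSet G S}) ⟨_, Set.univ, Set.toFinite _, rfl, isTollSet_univ G⟩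
  exact ⟨S, hS, hSG⟩

lemma tollNumber_le_ncard [Finite V] {S : Set V} (hS : IsTollSet G S) :
    tollNumber G ≤ S.ncard :=
  Nat.sInf_le ⟨S, S.toFinite, rfl, hS⟩

lemma IsTollSet.extremeVertices_subset {S : Set V} (hS : IsTollSet G S) :
    extremeVertices G ⊆ S := by
  intro s hs
  obtain ⟨u, hu, v, hv, hs'⟩ := hS s
  by_contra hsS
  exact hs u v (ne_of_mem_of_not_mem hu hsS) (ne_of_mem_of_not_mem hv hsS) hs'

lemma ncard_extremeVertices_le_tollNumber [Finite V] (G : SimpleGraph V) :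
    (extremeVertices G).ncard ≤ tollNumber G := by
  obtain ⟨S, hS, hSG⟩ := exists_isTollSet_ncard_eq_tollNumber G
  exact hS ▸ Set.ncard_le_ncard hSG.extremeVertices_subset

end TollNumber

section LexProdBounds

variable {V W : Type*} [Finite V] [Finite W]

lemma tollNumber_lexProd_le (G : SimpleGraph V) (H : SimpleGraph W) :
    tollNumber (lexProd G H) ≤ Nat.card W * tollNumber G := by
  obtain ⟨S, hS, hSG⟩ := exists_isTollSet_ncard_eq_tollNumber G
  calc tollNumber (lexProd G H)
      ≤ (S ×ˢ (Set.univ : Set W)).ncard := tollNumber_le_ncard hSG.prod_univ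
    _ = Nat.card W * tollNumber G := by rw [Set.ncard_prod, Set.ncard_univ, hS, mul_comm]

lemma card_mul_ncard_extremeVertices_le_tollNumber_lexProd (G : SimpleGraph V) :
    Nat.card W * (extremeVertices G).ncard ≤ tollNumber (lexProd G (⊤ : SimpleGraph W)) :=
  calc Nat.card W * (extremeVertices G).ncard
      = (extremeVertices G ×ˢ (Set.univ : Set W)).ncard := by
        rw [Set.ncard_prod, Set.ncard_univ, mul_comm]
    _ ≤ (extremeVertices (lexProd G (⊤ : SimpleGraph W))).ncard :=
        Set.ncard_le_ncard fun _ ⟨hs, _⟩ ↦ mk_mem_extremeVertices_lexProd hs _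
    _ ≤ tollNumber (lexProd G (⊤ : SimpleGraph W)) := ncard_extremeVertices_le_tollNumber _

end LexProdBounds

theorem stmt8_general {V : Type*} [Fintype V] (G : SimpleGraph V) (n : ℕ) :
    n * (extremeVertices G).ncard ≤ tollNumber (lexProd G (⊤ : SimpleGraph (Fin n))) ∧
    tollNumber (lexProd G (⊤ : SimpleGraph (Fin n))) ≤ n * tollNumber G := by
  have hlower := card_mul_ncard_extremeVertices_le_tollNumber_lexProd (W := Fin n) G
  have hupper := tollNumber_lexProd_le G (⊤ : SimpleGraph (Fin n))
  rw [Nat.card_fin] at hlower hupper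
  exact ⟨hlower, hupper⟩

theorem stmt8 {V : Type*} [Fintype V] [Nontrivial V] (G : SimpleGraph V) (n : ℕ) (hn : 1 ≤ n) :
    n * (extremeVertices G).ncard ≤ tollNumber (lexProd G (⊤ : SimpleGraph (Fin n))) ∧
    tollNumber (lexProd G (⊤ : SimpleGraph (Fin n))) ≤ n * tollNumber G :=
  stmt8_general G n
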